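/- Let G be a group of order 27 in which some element has order 9 and which is nonabelian. Then G is isomorphic to the semidirect product C₉ ⋊ C₃ where the generator of C₃ acts on C₉ = ℤ/9ℤ by multiplication by 4. -/

import Mathlib

/-- The semidirect product `ℤ/9ℤ ⋊ ℤ/3ℤ`, where the generator of `ℤ/3ℤ` acts on
`ℤ/9ℤ` by multiplication by `4`. -/
def SD27 : Type := ZMod 9 × ZMod 3

instance : Group SD27 where
  mul x y := (x.1 + 4 ^ x.2.val * y.1, x.2 + y.2)
  one := ((0 : ZMod 9), (0 : ZMod 3))
  inv x := (-(4 ^ (-x.2).val * x.1), -x.2)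
  mul_assoc := by
    rintro ⟨a, i⟩ ⟨b, j⟩ ⟨c, k⟩
    have h : ∀ i j : ZMod 3, (4 : ZMod 9) ^ (i + j).val = 4 ^ i.val * 4 ^ j.val := by
      decide
    show ((a + 4 ^ i.val * b + 4 ^ (i + j).val * c, i + j + k) : ZMod 9 × ZMod 3) =
      (a + 4 ^ i.val * (b + 4 ^ j.val * c), i + (j + k))
    exact Prod.ext (by rw [h]; ring) (add_assoc i j k)
  one_mul := by
    rintro ⟨a, i⟩
    show (((0 : ZMod 9) + 4 ^ (0 : ZMod 3).val * a, 0 + i) : ZMod 9 × ZMod 3) = (a, i)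
    exact Prod.ext (by norm_num) (zero_add i)
  mul_one := by
    rintro ⟨a, i⟩
    show ((a + 4 ^ i.val * 0, i + 0) : ZMod 9 × ZMod 3) = (a, i)
    exact Prod.ext (by ring) (add_zero i)
  inv_mul_cancel := by
    rintro ⟨a, i⟩
    show ((-(4 ^ (-i).val * a) + 4 ^ (-i).val * a, -i + i) : ZMod 9 × ZMod 3) =
      ((0 : ZMod 9), (0 : ZMod 3))
    exact Prod.ext (by ring) (neg_add_cancel i)

/-!
Let `g` have order 9. Its cyclic subgroup `H` has index 3, the smallest prime dividing 27, so it is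
normal and contains every cube. Conjugation acts on `H` through an automorphism `g ↦ g ^ k` with
`k ^ 3 ≡ 1 [MOD 9]`, because cubes centralise `H`; it cannot be trivial for every element, since
`H` central with `G ⧸ H` cyclic would make `G` abelian. So `k ≡ 4` or `k ≡ 7`, and replacing the
conjugating element by its square if necessary we get `s` with `s g s⁻¹ = g ^ 4`. As
`(s g ^ m) ^ 3 = g ^ (84 m) s ^ 3` and `s ^ 3 = g ^ c` with `3 ∣ c`, a suitable `m` gives an element
`b = s g ^ m` of order 3 acting on `g` by `g ↦ g ^ 4`. The assignment `(x, i) ↦ g ^ x b ^ i` is then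
an injective homomorphism `SD27 →* G` between groups of order 27.
-/

open Subgroup

section

variable {G : Type*} [Group G]

theorem pow_eq_pow_of_natCast_eq {a : G} {n i j : ℕ} (ha : a ^ n = 1)
    (h : (i : ZMod n) = j) : a ^ i = a ^ j :=
  pow_eq_pow_of_modEq ((ZMod.natCast_eq_natCast_iff _ _ _).mp h) ha

theorem pow_eq_pow_iff_natCast_eq {a : G} {i j : ℕ} :
    a ^ i = a ^ j ↔ (i : ZMod (orderOf a)) = j := by
  rw [pow_eq_pow_iff_modEq, ZMod.natCast_eq_natCast_iff]

namespace SemiconjBy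

variable {a b : G} {k : ℕ}

theorem pow_left_pow (h : SemiconjBy b a (a ^ k)) (i : ℕ) : SemiconjBy (b ^ i) a (a ^ k ^ i) := by
  induction i with
  | zero => simp
  | succ i ih =>
    rw [pow_succ, pow_succ k, pow_mul]
    exact (ih.pow_right k).mul_left h

theorem mul_pow_pow (h : SemiconjBy b a (a ^ k)) (m n : ℕ) :
    (b * a ^ m) ^ n = a ^ (m * ∑ i ∈ Finset.range n, k ^ (i + 1)) * b ^ n := by
  induction n with
  | zero => simp
  | succ n ih =>
    have hcomm : b ^ (n + 1) * a ^ m = a ^ (m * k ^ (n + 1)) * b ^ (n + 1) := by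
      rw [mul_comm m, pow_mul]
      exact ((h.pow_left_pow (n + 1)).pow_right m).eq
    calc (b * a ^ m) ^ (n + 1)
        = a ^ (m * ∑ i ∈ Finset.range n, k ^ (i + 1)) * (b ^ (n + 1) * a ^ m) := by
          rw [pow_succ, ih, pow_succ]; group
      _ = a ^ (m * ∑ i ∈ Finset.range (n + 1), k ^ (i + 1)) * b ^ (n + 1) := by
          rw [hcomm, Finset.sum_range_succ, mul_add, pow_add a, mul_assoc]

end SemiconjBy

namespace SD27

theorem card_eq : Nat.card SD27 = 27 := by
  change Nat.card (ZMod 9 × ZMod 3) = 27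
  rw [Nat.card_prod, Nat.card_zmod, Nat.card_zmod]

def lift (a b : G) (ha : a ^ 9 = 1) (hb : b ^ 3 = 1) (hab : SemiconjBy b a (a ^ 4)) :
    SD27 →* G where
  toFun x := a ^ x.1.val * b ^ x.2.val
  map_one' := by
    change a ^ (0 : ZMod 9).val * b ^ (0 : ZMod 3).val = 1
    simp
  map_mul' := by
    rintro ⟨A, i⟩ ⟨B, j⟩
    change a ^ (A + 4 ^ i.val * B).val * b ^ (i + j).val =
      a ^ A.val * b ^ i.val * (a ^ B.val * b ^ j.val)
    have hA : a ^ (A + 4 ^ i.val * B).val = a ^ (A.val + 4 ^ i.val * B.val) :=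
      pow_eq_pow_of_natCast_eq ha (by simp)
    have hi : b ^ (i + j).val = b ^ (i.val + j.val) := pow_eq_pow_of_natCast_eq hb (by simp)
    have hcomm : b ^ i.val * a ^ B.val = a ^ (4 ^ i.val * B.val) * b ^ i.val := by
      rw [pow_mul]
      exact ((hab.pow_left_pow i.val).pow_right B.val).eq
    rw [hA, hi, pow_add, pow_add, mul_assoc, mul_assoc, ← mul_assoc (b ^ i.val), hcomm]
    group

variable {a b : G}

theorem lift_injective (ha : a ^ 9 = 1) (hb : b ^ 3 = 1) (hab : SemiconjBy b a (a ^ 4))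
    (ha_order : orderOf a = 9) : Function.Injective (lift a b ha hb hab) := by
  have hba : b ∉ zpowers a := by
    intro hb
    obtain ⟨k, rfl⟩ := mem_zpowers_iff.mp hb
    have h41 : a ^ 4 = a ^ 1 := by
      rw [pow_one]
      exact mul_right_cancel (hab.eq.symm.trans ((Commute.refl a).zpow_left k).eq)
    exact absurd (pow_eq_pow_iff_natCast_eq.mp h41) (by rw [ha_order]; decide)
  rw [injective_iff_map_eq_one]
  rintro ⟨A, i⟩ h
  change a ^ A.val * b ^ i.val = 1 at h
  obtain rfl : i = 0 := by
    by_contra hi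
    have hbi : b ^ i.val ∈ zpowers a := by
      rw [eq_inv_of_mul_eq_one_right h]
      exact inv_mem (pow_mem (mem_zpowers a) _)
    have hsq : ∀ x : ZMod 3, x ≠ 0 → x * x = 1 := by decide
    have hb_eq : b = (b ^ i.val) ^ i.val := by
      rw [← pow_mul, ← pow_one b, ← pow_mul]
      exact pow_eq_pow_of_natCast_eq hb (by simp [hsq i hi])
    exact hba (hb_eq ▸ pow_mem hbi _)
  rw [ZMod.val_zero, pow_zero, mul_one, ← pow_zero a, pow_eq_pow_iff_natCast_eq, ha_order] at h
  obtain rfl : A = 0 := by simpa using h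
  rfl

end SD27

variable {g : G}

theorem index_zpowers_eq_three (h27 : Nat.card G = 27) (hg : orderOf g = 9) :
    (zpowers g).index = 3 := by
  have h := (zpowers g).card_mul_index
  rw [Nat.card_zpowers, hg, h27] at h
  omega

theorem zpowers_normal (h27 : Nat.card G = 27) (hg : orderOf g = 9) : (zpowers g).Normal :=
  normal_of_index_eq_minFac_card (by rw [index_zpowers_eq_three h27 hg, h27]; norm_num)

theorem exists_pow_eq_of_mem_zpowers (hg : orderOf g = 9) {x : G} (hx : x ∈ zpowers g) :
    ∃ n : ℕ, g ^ n = x :=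
  (isOfFinOrder_iff_pow_eq_one.mpr ⟨9, by norm_num, hg ▸ pow_orderOf_eq_one g⟩
    ).mem_powers_iff_mem_zpowers.mpr hx

theorem exists_pow_three_eq (h27 : Nat.card G = 27) (hg : orderOf g = 9) (x : G) :
    ∃ c : ℕ, g ^ c = x ^ 3 := by
  have := zpowers_normal h27 hg
  apply exists_pow_eq_of_mem_zpowers hg
  simpa [index_zpowers_eq_three h27 hg] using (zpowers g).pow_index_mem x

theorem exists_not_commute (h27 : Nat.card G = 27) (hg : orderOf g = 9)
    (hna : ¬ ∀ x y : G, x * y = y * x) : ∃ t : G, ¬ Commute g t := by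
  by_contra! hcomm
  have := zpowers_normal h27 hg
  have hcenter : zpowers g ≤ center G :=
    zpowers_le.mpr (mem_center_iff.mpr fun t ↦ (hcomm t).eq.symm)
  have : IsCyclic (G ⧸ zpowers g) :=
    isCyclic_of_prime_card (p := 3) (by rw [← index_eq_card, index_zpowers_eq_three h27 hg])
  exact hna ((QuotientGroup.mk' (zpowers g)).isMulCommutative_of_isCyclic_of_ker_le_center
    (by rwa [QuotientGroup.ker_mk'])).is_comm.comm

theorem exists_semiconjBy_pow_four (h27 : Nat.card G = 27) (hg : orderOf g = 9) {t : G}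
    (ht : ¬ Commute g t) : ∃ s : G, SemiconjBy s g (g ^ 4) := by
  have hg9 : g ^ 9 = 1 := hg ▸ pow_orderOf_eq_one g
  obtain ⟨k, hk⟩ := exists_pow_eq_of_mem_zpowers hg
    ((zpowers_normal h27 hg).conj_mem g (mem_zpowers g) t)
  have htk : SemiconjBy t g (g ^ k) := by
    rw [hk]
    exact (inv_mul_cancel_right (t * g) t).symm
  have hcube : SemiconjBy (t ^ 3) g g := by
    obtain ⟨c, hc⟩ := exists_pow_three_eq h27 hg t
    rw [← hc]
    exact (Commute.refl g).pow_left c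
  have hk3 : (k : ZMod 9) ^ 3 = 1 := by
    have h : g ^ k ^ 3 = g ^ 1 := by
      rw [pow_one]
      exact mul_right_cancel ((htk.pow_left_pow 3).eq.symm.trans hcube.eq)
    rw [pow_eq_pow_iff_natCast_eq, hg] at h
    exact_mod_cast h
  have hk1 : (k : ZMod 9) ≠ 1 := by
    intro h1
    have h : g ^ k = g ^ 1 := pow_eq_pow_of_natCast_eq hg9 (by rw [h1, Nat.cast_one])
    exact ht (htk.eq.trans (by rw [h, pow_one])).symm
  obtain ⟨j, -, hj⟩ : ∃ j < 3, (k : ZMod 9) ^ j = 4 := by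
    revert hk3 hk1
    generalize (k : ZMod 9) = x
    revert x
    decide
  have h4 : g ^ k ^ j = g ^ 4 := pow_eq_pow_of_natCast_eq hg9 (by simpa using hj)
  exact ⟨t ^ j, h4 ▸ htk.pow_left_pow j⟩

theorem exists_pow_three_eq_one_semiconjBy (h27 : Nat.card G = 27) (hg : orderOf g = 9)
    {s : G} (hs : SemiconjBy s g (g ^ 4)) : ∃ b : G, b ^ 3 = 1 ∧ SemiconjBy b g (g ^ 4) := by
  obtain ⟨c, hc⟩ := exists_pow_three_eq h27 hg s
  -- `s` commutes with `s ^ 3 = g ^ c` but conjugates it to `g ^ (4 * c)`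
  have h3c : 3 ∣ c := by
    have h : g ^ (4 * c) = g ^ c := by
      have hself := (Commute.self_pow s 3).eq
      rw [← hc] at hself
      rw [pow_mul]
      exact mul_right_cancel ((hs.pow_right c).eq.symm.trans hself)
    rw [pow_eq_pow_iff_modEq, hg] at h
    have h' : 4 * c % 9 = c % 9 := h
    omega
  refine ⟨s * g ^ (2 * (c / 3)), ?_, hs.mul_left ((Commute.refl g).pow_left _)⟩
  rw [hs.mul_pow_pow, ← hc, ← pow_add, ← orderOf_dvd_iff_pow_eq_one, hg]
  norm_num [Finset.sum_range_succ]
  omega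

end

/-- Any nonabelian group of order 27 containing an element of order 9 is
isomorphic to `ℤ/9ℤ ⋊ ℤ/3ℤ` with the generator of `ℤ/3ℤ` acting by
multiplication by 4. -/
theorem stmt_15 {G : Type*} [Group G] (h27 : Nat.card G = 27)
    (h9 : ∃ g : G, orderOf g = 9) (hna : ¬ ∀ x y : G, x * y = y * x) :
    Nonempty (G ≃* SD27) := by
  obtain ⟨g, hg⟩ := h9
  obtain ⟨t, ht⟩ := exists_not_commute h27 hg hna
  obtain ⟨s, hs⟩ := exists_semiconjBy_pow_four h27 hg ht
  obtain ⟨b, hb, hbg⟩ := exists_pow_three_eq_one_semiconjBy h27 hg hs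
  have : Finite G := Nat.finite_of_card_ne_zero (by rw [h27]; norm_num)
  have hinj := SD27.lift_injective (hg ▸ pow_orderOf_eq_one g) hb hbg hg
  exact ⟨(MulEquiv.ofBijective _ ((Nat.bijective_iff_injective_and_card _).mpr
    ⟨hinj, by rw [SD27.card_eq, h27]⟩)).symm⟩
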